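/- arXiv:2512.20219 — 2 statements merged into one kernel-verified Lean document; each statement's English description precedes it below -/
import Mathlib

section
/- Let Y, W₁, W₂, E be random variables with W₁, W₂, E mutually independent, E[E] = 0, and Y = W₁ + W₂ + E with all variables square-integrable with positive variances. Then Var(E[Y | W₁, W₂]) − Var(E[Y | W₁]) − Var(E[Y | W₂]) = 0. Equivalently, E[(E[Y|W₁,W₂])²] − E[(E[Y|W₁])²] − E[(E[Y|W₂])²] + (E[Y])² = 0. -/
/-!
Conditioning on a σ-algebra independent of an integrable summand replaces that summand by its
mean, so `E[Y | W₁, W₂] = W₁ + W₂ + E[E]`, `E[Y | W₁] = W₁ + E[W₂ + E]` and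
`E[Y | W₂] = W₂ + E[W₁ + E]`. Their variances are `Var W₁ + Var W₂`, `Var W₁` and `Var W₂` by
independence of `W₁` and `W₂`. The second identity follows because every conditional expectation
of `Y` has mean `E[Y]`.
-/

open MeasureTheory ProbabilityTheory

namespace ProbabilityTheory

variable {Ω : Type*} {mΩ : MeasurableSpace Ω} {μ : Measure Ω}

lemma iIndepFun.indep_comap_sup_comap {ι : Type*} {β : ι → Type*} {mβ : ∀ i, MeasurableSpace (β i)}
    {f : ∀ i, Ω → β i} (hf : iIndepFun f μ) (hf_meas : ∀ i, Measurable (f i))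
    {i j k : ι} (hik : i ≠ k) (hjk : j ≠ k) :
    Indep ((mβ i).comap (f i) ⊔ (mβ j).comap (f j)) ((mβ k).comap (f k)) μ := by
  have h := hf.indepFun_prodMk hf_meas i j k hik hjk
  rw [IndepFun_iff_Indep] at h
  exact MeasurableSpace.comap_prodMk (f i) (f j) ▸ h

lemma stronglyMeasurable_comap_sup_add (f g : Ω → ℝ) :
    StronglyMeasurable[MeasurableSpace.comap f inferInstance
      ⊔ MeasurableSpace.comap g inferInstance] (f + g) :=
  ((comap_measurable f).mono le_sup_left le_rfl).add
    ((comap_measurable g).mono le_sup_right le_rfl) |>.stronglyMeasurable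

lemma condExp_add_indep_ae_eq {m mZ : MeasurableSpace Ω} (hm : m ≤ mΩ) (hmZ : mZ ≤ mΩ)
    [SigmaFinite (μ.trim hm)] {X Z : Ω → ℝ} (hX : StronglyMeasurable[m] X) (hXi : Integrable X μ)
    (hZ : StronglyMeasurable[mZ] Z) (hZi : Integrable Z μ) (hind : Indep mZ m μ) :
    μ[X + Z | m] =ᵐ[μ] fun ω => X ω + μ[Z] := by
  refine (condExp_add hXi hZi m).trans ?_
  rw [condExp_of_stronglyMeasurable hm hX hXi]
  exact Filter.EventuallyEq.rfl.add (condExp_indep_eq hmZ hm hZ hind)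

lemma variance_condExp_add_indep [IsProbabilityMeasure μ] {m mZ : MeasurableSpace Ω}
    (hm : m ≤ mΩ) (hmZ : mZ ≤ mΩ) {X Z : Ω → ℝ} (hX : StronglyMeasurable[m] X)
    (hXi : Integrable X μ) (hZ : StronglyMeasurable[mZ] Z) (hZi : Integrable Z μ)
    (hind : Indep mZ m μ) :
    variance (μ[X + Z | m]) μ = variance X μ := by
  rw [variance_congr (condExp_add_indep_ae_eq hm hmZ hX hXi hZ hZi hind),
    variance_add_const hXi.aestronglyMeasurable]

lemma integral_condExp_sq [IsProbabilityMeasure μ] {m : MeasurableSpace Ω} (hm : m ≤ mΩ)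
    {Y : Ω → ℝ} (hY : MemLp Y 2 μ) :
    ∫ ω, (μ[Y | m] ω) ^ 2 ∂μ = variance (μ[Y | m]) μ + (∫ ω, Y ω ∂μ) ^ 2 := by
  rw [variance_eq_sub (hY.condExp one_le_two), integral_condExp hm]
  simp only [Pi.pow_apply]
  ring

end ProbabilityTheory

theorem additive_model_no_interaction_general
    {Ω : Type*} {mΩ : MeasurableSpace Ω} (P : Measure Ω) [IsProbabilityMeasure P]
    (W₁ W₂ Eps : Ω → ℝ) (hW₁ : Measurable W₁) (hW₂ : Measurable W₂)
    (hEps : Measurable Eps)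
    (hindep : iIndepFun ![W₁, W₂, Eps] P)
    (hW₁2 : MemLp W₁ 2 P) (hW₂2 : MemLp W₂ 2 P) (hEps2 : MemLp Eps 2 P)
    (Y : Ω → ℝ) (hY : Y = fun ω => W₁ ω + W₂ ω + Eps ω) :
    variance (P[Y | MeasurableSpace.comap W₁ inferInstance
        ⊔ MeasurableSpace.comap W₂ inferInstance]) P
      - variance (P[Y | MeasurableSpace.comap W₁ inferInstance]) P
      - variance (P[Y | MeasurableSpace.comap W₂ inferInstance]) P = 0
    ∧ (∫ ω, ((P[Y | MeasurableSpace.comap W₁ inferInstance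
          ⊔ MeasurableSpace.comap W₂ inferInstance]) ω) ^ 2 ∂P)
      - (∫ ω, ((P[Y | MeasurableSpace.comap W₁ inferInstance]) ω) ^ 2 ∂P)
      - (∫ ω, ((P[Y | MeasurableSpace.comap W₂ inferInstance]) ω) ^ 2 ∂P)
      + (∫ ω, Y ω ∂P) ^ 2 = 0 := by
  have hmeas : ∀ i, Measurable (![W₁, W₂, Eps] i) := fun i => by fin_cases i <;> assumption
  have hsm {f : Ω → ℝ} : StronglyMeasurable[MeasurableSpace.comap f inferInstance] f :=
    (comap_measurable f).stronglyMeasurable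
  have hi₁ := hW₁2.integrable one_le_two
  have hi₂ := hW₂2.integrable one_le_two
  have hiE := hEps2.integrable one_le_two
  have hv₁₂ : variance (P[Y | MeasurableSpace.comap W₁ inferInstance
      ⊔ MeasurableSpace.comap W₂ inferInstance]) P = variance W₁ P + variance W₂ P := by
    rw [show Y = W₁ + W₂ + Eps from hY, variance_condExp_add_indep
      (sup_le hW₁.comap_le hW₂.comap_le) hEps.comap_le (stronglyMeasurable_comap_sup_add _ _)
      (hi₁.add hi₂) hsm hiE
      (hindep.indep_comap_sup_comap hmeas (i := 0) (j := 1) (k := 2) (by decide) (by decide)).symm]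
    exact (hindep.indepFun (show (0 : Fin 3) ≠ 1 by decide)).variance_add hW₁2 hW₂2
  have hv₁ : variance (P[Y | MeasurableSpace.comap W₁ inferInstance]) P = variance W₁ P := by
    rw [show Y = W₁ + (W₂ + Eps) by rw [hY]; ext; simp only [Pi.add_apply]; ring]
    exact variance_condExp_add_indep hW₁.comap_le (sup_le hW₂.comap_le hEps.comap_le) hsm hi₁
      (stronglyMeasurable_comap_sup_add _ _) (hi₂.add hiE)
      (hindep.indep_comap_sup_comap hmeas (i := 1) (j := 2) (k := 0) (by decide) (by decide))
  have hv₂ : variance (P[Y | MeasurableSpace.comap W₂ inferInstance]) P = variance W₂ P := by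
    rw [show Y = W₂ + (W₁ + Eps) by rw [hY]; ext; simp only [Pi.add_apply]; ring]
    exact variance_condExp_add_indep hW₂.comap_le (sup_le hW₁.comap_le hEps.comap_le) hsm hi₂
      (stronglyMeasurable_comap_sup_add _ _) (hi₁.add hiE)
      (hindep.indep_comap_sup_comap hmeas (i := 0) (j := 2) (k := 1) (by decide) (by decide))
  have hY2 : MemLp Y 2 P := hY ▸ (hW₁2.add hW₂2).add hEps2
  refine ⟨by rw [hv₁₂, hv₁, hv₂]; ring, ?_⟩
  rw [integral_condExp_sq (sup_le hW₁.comap_le hW₂.comap_le) hY2,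
    integral_condExp_sq hW₁.comap_le hY2, integral_condExp_sq hW₂.comap_le hY2, hv₁₂, hv₁, hv₂]
  ring

/-- In the additive model `Y = W₁ + W₂ + E` with mutually independent inputs and
mean-zero noise, the interaction explainability of `W₁` and `W₂` vanishes:
`Var(E[Y|W₁,W₂]) − Var(E[Y|W₁]) − Var(E[Y|W₂]) = 0`, equivalently
`E[(E[Y|W₁,W₂])²] − E[(E[Y|W₁])²] − E[(E[Y|W₂])²] + (E[Y])² = 0`. -/
theorem additive_model_no_interaction
    {Ω : Type*} {mΩ : MeasurableSpace Ω} (P : Measure Ω) [IsProbabilityMeasure P]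
    (W₁ W₂ Eps : Ω → ℝ) (hW₁ : Measurable W₁) (hW₂ : Measurable W₂)
    (hEps : Measurable Eps)
    (hindep : iIndepFun ![W₁, W₂, Eps] P)
    (hmean : ∫ ω, Eps ω ∂P = 0)
    (hW₁2 : MemLp W₁ 2 P) (hW₂2 : MemLp W₂ 2 P) (hEps2 : MemLp Eps 2 P)
    (hvW₁ : 0 < variance W₁ P) (hvW₂ : 0 < variance W₂ P)
    (hvEps : 0 < variance Eps P)
    (Y : Ω → ℝ) (hY : Y = fun ω => W₁ ω + W₂ ω + Eps ω) :
    variance (P[Y | MeasurableSpace.comap W₁ inferInstance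
        ⊔ MeasurableSpace.comap W₂ inferInstance]) P
      - variance (P[Y | MeasurableSpace.comap W₁ inferInstance]) P
      - variance (P[Y | MeasurableSpace.comap W₂ inferInstance]) P = 0
    ∧ (∫ ω, ((P[Y | MeasurableSpace.comap W₁ inferInstance
          ⊔ MeasurableSpace.comap W₂ inferInstance]) ω) ^ 2 ∂P)
      - (∫ ω, ((P[Y | MeasurableSpace.comap W₁ inferInstance]) ω) ^ 2 ∂P)
      - (∫ ω, ((P[Y | MeasurableSpace.comap W₂ inferInstance]) ω) ^ 2 ∂P)
      + (∫ ω, Y ω ∂P) ^ 2 = 0 :=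
  additive_model_no_interaction_general (mΩ := mΩ) P W₁ W₂ Eps hW₁ hW₂ hEps hindep hW₁2 hW₂2 hEps2 Y
    hY
end

section
/- Let W = (W_S, W_{−S}) with mutually independent components, E an error independent of W with mean zero, and Y(w) = f(w) + E for a bounded measurable f. Then Var(Y(W) − Y(W'_S, W_{−S})) = 0 (where W'_S is an independent copy of W_S, independent of everything else, and both outcomes use the same E) if and only if f(w_S, w_{−S}) = f(w'_S, w_{−S}) for P_{W_S} ⊗ P_{W_S} ⊗ P_{W_{−S}}-almost all (w_S, w'_S, w_{−S}). -/
/-!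
Both outcomes share the error `E`, so their difference is `g(W_S, W'_S, W_{−S})` with
`g(a, b, c) = f(a, c) - f(b, c)`. The law `P_{W_S} ⊗ P_{W_S} ⊗ P_{W_{−S}}` of this triple is
invariant under exchanging its first two coordinates, which negates `g`; hence the difference
has mean zero, and being bounded, its variance vanishes iff it vanishes almost surely, i.e. iff
`g = 0` almost everywhere for the law of the triple.
-/

open MeasureTheory ProbabilityTheory

section

variable {α β γ : Type*} [MeasurableSpace α] [MeasurableSpace β] [MeasurableSpace γ]

def MeasurableEquiv.prodLeftComm : α × β × γ ≃ᵐ β × α × γ where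
  toFun x := (x.2.1, x.1, x.2.2)
  invFun x := (x.2.1, x.1, x.2.2)
  left_inv _ := rfl
  right_inv _ := rfl
  measurable_toFun := (by fun_prop : Measurable fun x : α × β × γ => (x.2.1, x.1, x.2.2))
  measurable_invFun := (by fun_prop : Measurable fun x : β × α × γ => (x.2.1, x.1, x.2.2))

namespace MeasureTheory

theorem measurePreserving_prodLeftComm (μ : Measure α) (ν : Measure β) (ρ : Measure γ)
    [SFinite μ] [SFinite ν] [SFinite ρ] :
    MeasurePreserving MeasurableEquiv.prodLeftComm (μ.prod (ν.prod ρ)) (ν.prod (μ.prod ρ)) :=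
  (measurePreserving_prodAssoc ν μ ρ).comp
    ((Measure.measurePreserving_swap.prod (MeasurePreserving.id ρ)).comp
      ((measurePreserving_prodAssoc μ ν ρ).symm _))

theorem Measure.map_prodMap_id_fst_prod (μ : Measure α) (ν : Measure β) (σ : Measure γ)
    [SFinite μ] [SFinite ν] [IsProbabilityMeasure σ] :
    (μ.prod (ν.prod σ)).map (Prod.map id Prod.fst) = μ.prod ν := by
  rw [← Measure.map_prod_map _ _ measurable_id measurable_fst, Measure.map_id,
    Measure.map_fst_prod, measure_univ, one_smul]

theorem integral_eq_zero_of_comp_eq_neg {E : Type*} [NormedAddCommGroup E] [NormedSpace ℝ E]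
    {μ : Measure α} {e : α ≃ᵐ α} (he : MeasurePreserving e μ μ) {g : α → E}
    (hg : ∀ x, g (e x) = -g x) : ∫ x, g x ∂μ = 0 := by
  have h := he.integral_comp' g
  simp only [hg, integral_neg] at h
  have h₂ : (2 : ℝ) • ∫ x, g x ∂μ = 0 := by
    rw [two_smul]; nth_rewrite 1 [← h]; exact neg_add_cancel _
  exact (smul_eq_zero.mp h₂).resolve_left two_ne_zero

end MeasureTheory

end

namespace ProbabilityTheory

theorem variance_eq_zero_iff_ae_eq_zero {Ω : Type*} {mΩ : MeasurableSpace Ω} {μ : Measure Ω}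
    {X : Ω → ℝ} (hX : MemLp X 2 μ) (hX₀ : μ[X] = 0) : Var[X; μ] = 0 ↔ X =ᵐ[μ] 0 := by
  rw [variance_of_integral_eq_zero hX.aemeasurable hX₀,
    integral_eq_zero_iff_of_nonneg (fun _ => sq_nonneg _) hX.integrable_sq]
  simp only [Filter.EventuallyEq, Pi.zero_apply, pow_eq_zero_iff two_ne_zero]

end ProbabilityTheory

theorem sharp_null_equivalence_general
    {Ω α β : Type*} {mΩ : MeasurableSpace Ω} [MeasurableSpace α] [MeasurableSpace β]
    (P : Measure Ω) [IsProbabilityMeasure P]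
    (WS WS' : Ω → α) (Wneg : Ω → β) (Eps : Ω → ℝ) (f : α × β → ℝ)
    (hWS : Measurable WS) (hWS' : Measurable WS') (hWneg : Measurable Wneg)
    (hEps : Measurable Eps) (hf : Measurable f)
    (C : ℝ) (hbound : ∀ x, |f x| ≤ C)
    -- mutual independence of `(W_S, W'_S, W_{−S}, E)` together with the fact
    -- that `W'_S` has the same law as `W_S`:
    (hjoint : Measure.map (fun ω => (WS ω, WS' ω, Wneg ω, Eps ω)) P
      = (Measure.map WS P).prod ((Measure.map WS P).prod
          ((Measure.map Wneg P).prod (Measure.map Eps P)))) :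
    variance (fun ω => (f (WS ω, Wneg ω) + Eps ω) - (f (WS' ω, Wneg ω) + Eps ω)) P = 0
      ↔ ∀ᵐ x ∂((Measure.map WS P).prod ((Measure.map WS P).prod (Measure.map Wneg P))),
          f (x.1, x.2.2) = f (x.2.1, x.2.2) := by
  have := Measure.isProbabilityMeasure_map (μ := P) hWS.aemeasurable
  have := Measure.isProbabilityMeasure_map (μ := P) hWneg.aemeasurable
  have := Measure.isProbabilityMeasure_map (μ := P) hEps.aemeasurable
  let T : Ω → α × α × β := fun ω => (WS ω, WS' ω, Wneg ω)
  let g : α × α × β → ℝ := fun x => f (x.1, x.2.2) - f (x.2.1, x.2.2)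
  have hT : Measurable T := by fun_prop
  have hg : Measurable g := by fun_prop
  have hlaw : P.map T = (P.map WS).prod ((P.map WS).prod (P.map Wneg)) := by
    rw [show T = Prod.map id (Prod.map id Prod.fst) ∘ fun ω => (WS ω, WS' ω, Wneg ω, Eps ω)
        from rfl, ← Measure.map_map (by fun_prop) (by fun_prop), hjoint,
      ← Measure.map_prod_map _ _ measurable_id (measurable_id.prodMap measurable_fst),
      Measure.map_id, Measure.map_prodMap_id_fst_prod]
  have hmean : P[g ∘ T] = 0 := by
    rw [Function.comp_def, ← integral_map hT.aemeasurable hg.aestronglyMeasurable, hlaw]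
    exact integral_eq_zero_of_comp_eq_neg (measurePreserving_prodLeftComm _ _ _)
      fun _ => (neg_sub _ _).symm
  have hL2 : MemLp (g ∘ T) 2 P := MemLp.of_bound (hg.comp hT).aestronglyMeasurable (C + C)
    (ae_of_all _ fun _ => (norm_sub_le _ _).trans (add_le_add (hbound _) (hbound _)))
  have hY : (fun ω => (f (WS ω, Wneg ω) + Eps ω) - (f (WS' ω, Wneg ω) + Eps ω)) = g ∘ T :=
    funext fun _ => add_sub_add_right_eq_sub _ _ _
  rw [hY, variance_eq_zero_iff_ae_eq_zero hL2 hmean, ← hlaw, Filter.EventuallyEq,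
    ae_map_iff hT.aemeasurable (measurableSet_eq_fun (by fun_prop) (by fun_prop))]
  simp only [Function.comp_apply, Pi.zero_apply, g, sub_eq_zero]

/-- Sharp-null equivalence: with `Y(w) = f(w) + E`, mutually independent
`(W_S, W'_S, W_{−S}, E)` where `W'_S` is an independent copy of `W_S`, the total
explainability of the block `W_S` vanishes, i.e.
`Var(Y(W_S, W_{−S}) − Y(W'_S, W_{−S})) = 0`, if and only if
`f(w_S, w_{−S}) = f(w'_S, w_{−S})` for `P_{W_S} ⊗ P_{W_S} ⊗ P_{W_{−S}}`-a.e.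
`(w_S, w'_S, w_{−S})`. -/
theorem sharp_null_equivalence
    {Ω α β : Type*} {mΩ : MeasurableSpace Ω} [MeasurableSpace α] [MeasurableSpace β]
    (P : Measure Ω) [IsProbabilityMeasure P]
    (WS WS' : Ω → α) (Wneg : Ω → β) (Eps : Ω → ℝ) (f : α × β → ℝ)
    (hWS : Measurable WS) (hWS' : Measurable WS') (hWneg : Measurable Wneg)
    (hEps : Measurable Eps) (hf : Measurable f)
    (C : ℝ) (hbound : ∀ x, |f x| ≤ C)
    (hmean : ∫ ω, Eps ω ∂P = 0)
    -- mutual independence of `(W_S, W'_S, W_{−S}, E)` together with the fact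
    -- that `W'_S` has the same law as `W_S`:
    (hjoint : Measure.map (fun ω => (WS ω, WS' ω, Wneg ω, Eps ω)) P
      = (Measure.map WS P).prod ((Measure.map WS P).prod
          ((Measure.map Wneg P).prod (Measure.map Eps P)))) :
    variance (fun ω => (f (WS ω, Wneg ω) + Eps ω) - (f (WS' ω, Wneg ω) + Eps ω)) P = 0
      ↔ ∀ᵐ x ∂((Measure.map WS P).prod ((Measure.map WS P).prod (Measure.map Wneg P))),
          f (x.1, x.2.2) = f (x.2.1, x.2.2) :=
  sharp_null_equivalence_general (mΩ := mΩ) P WS WS' Wneg Eps f hWS hWS' hWneg hEps hf C hbound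
    hjoint
end
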